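/- arXiv:1312.6446 — 2 statements merged into one kernel-verified Lean document; each statement's English description precedes it below -/
import Mathlib

section
/- Let H, H₂ be Hilbert spaces, and let (V_t)_{t∈[0,1]} be a continuous family of closed subspaces of H (given by continuous projections P_t). Let D_t : V_t → H₂ be a family of uniformly bounded linear maps with closed range, depending continuously on t, such that D_t is an isomorphism for all t ∈ (0,1]. If D_0 is surjective, then D_0 is injective. -/
/-!
Put `Q t = D t ∘ P t`. Since `H` is a Hilbert space, the surjection `Q 0` has a continuous
linear right inverse `R` (invert `Q 0` on `(ker Q 0)ᗮ`). Then `Q t ∘ R` is close to the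
identity, hence invertible, for small `t > 0`, and `S t = R ∘ (Q t ∘ R)⁻¹` are right inverses
of `Q t` converging to `R`. For `x ∈ ker D 0 ∩ V 0`, injectivity of `D t` on `V t` forces
`P t x = P t (S t (Q t x))`; letting `t → 0` gives `x = P 0 x = P 0 (R (Q 0 x)) = 0`.
-/

open Set Filter Topology

theorem ContinuousLinearMap.HasRightInverse.of_surjective_of_innerProductSpace
    {𝕜 E F : Type*} [RCLike 𝕜] [NormedAddCommGroup E] [InnerProductSpace 𝕜 E]
    [CompleteSpace E]
    [NormedAddCommGroup F] [NormedSpace 𝕜 F] [CompleteSpace F]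
    {f : E →L[𝕜] F} (hf : Function.Surjective f) : f.HasRightInverse := by
  set K := LinearMap.ker (f : E →ₗ[𝕜] F)
  have : CompleteSpace K := f.isClosed_ker.completeSpace_coe
  set g := f.comp Kᗮ.subtypeL
  have hinj : LinearMap.ker (g : Kᗮ →ₗ[𝕜] F) = ⊥ := by
    rw [LinearMap.ker_eq_bot']
    intro v hv
    have hvK : (v : E) ∈ K ⊓ Kᗮ := ⟨hv, v.2⟩
    rw [K.inf_orthogonal_eq_bot, Submodule.mem_bot] at hvK
    exact Subtype.ext hvK
  have hsurj : LinearMap.range (g : Kᗮ →ₗ[𝕜] F) = ⊤ := by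
    rw [LinearMap.range_eq_top]
    intro y
    obtain ⟨x, rfl⟩ := hf y
    refine ⟨⟨x - K.starProjection x, K.sub_starProjection_mem_orthogonal x⟩, ?_⟩
    have : f (K.starProjection x) = 0 := K.starProjection_apply_mem x
    simp [g, this]
  let e := ContinuousLinearEquiv.ofBijective g hinj hsurj
  exact ⟨Kᗮ.subtypeL.comp (e.symm : F →L[𝕜] Kᗮ), e.apply_symm_apply⟩

theorem ContinuousWithinAt.apply_eq_zero_of_hasRightInverse {𝕜 E F G X : Type*}
    [NontriviallyNormedField 𝕜] [NormedAddCommGroup E] [NormedSpace 𝕜 E]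
    [NormedAddCommGroup F] [NormedSpace 𝕜 F] [CompleteSpace F]
    [NormedAddCommGroup G] [NormedSpace 𝕜 G] [TopologicalSpace X] {s : Set X} {x₀ : X}
    [(𝓝[s] x₀).NeBot] {P : X → E →L[𝕜] G} {Q : X → E →L[𝕜] F}
    (hP : ContinuousWithinAt P s x₀) (hQ : ContinuousWithinAt Q s x₀)
    (hQ₀ : (Q x₀).HasRightInverse) (hker : ∀ x ∈ s, ∀ v, Q x v = 0 → P x v = 0)
    {v : E} (hv : Q x₀ v = 0) : P x₀ v = 0 := by
  obtain ⟨R, hR⟩ := hQ₀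
  have hunit : IsUnit ((Q x₀).comp R) := by
    convert isUnit_one
    ext y
    exact hR y
  have hQR : ContinuousWithinAt (fun x ↦ (Q x).comp R) s x₀ :=
    hQ.clm_comp continuousWithinAt_const
  have hinv : ContinuousWithinAt (fun x ↦ Ring.inverse ((Q x).comp R)) s x₀ := by
    have := NormedRing.inverse_continuousAt hunit.unit
    rw [hunit.unit_spec] at this
    exact ContinuousAt.comp_continuousWithinAt (f := fun x ↦ (Q x).comp R) this hQR
  -- `R ∘ ((Q x) ∘ R)⁻¹` is a right inverse of `Q x` near `x₀`, continuous in `x`.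
  have hlift : ContinuousWithinAt
      (fun x ↦ P x (R (Ring.inverse ((Q x).comp R) (Q x v)))) s x₀ :=
    hP.clm_apply (continuousWithinAt_const.clm_apply
      (hinv.clm_apply (hQ.clm_apply continuousWithinAt_const)))
  have heq : ∀ᶠ x in 𝓝[s] x₀, P x v = P x (R (Ring.inverse ((Q x).comp R) (Q x v))) := by
    filter_upwards [self_mem_nhdsWithin, hQR.eventually (Units.isOpen.mem_nhds hunit)]
      with x hx hxunit
    have hright : Q x (R (Ring.inverse ((Q x).comp R) (Q x v))) = Q x v :=
      congr($(Ring.mul_inverse_cancel _ hxunit) (Q x v))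
    rw [← sub_eq_zero, ← map_sub]
    exact hker x hx _ (by rw [map_sub, hright, sub_self])
  have hlim := tendsto_nhds_unique_of_eventuallyEq (hP.clm_apply continuousWithinAt_const) hlift heq
  simpa [hv] using hlim

theorem stmt0_general
    {H H₂ : Type*} [NormedAddCommGroup H] [InnerProductSpace ℝ H] [CompleteSpace H]
    [NormedAddCommGroup H₂] [InnerProductSpace ℝ H₂] [CompleteSpace H₂]
    (P : ℝ → H →L[ℝ] H) (D : ℝ → H →L[ℝ] H₂)
    (hproj : ∀ t ∈ Icc (0:ℝ) 1, (P t).comp (P t) = P t)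
    (hPcont : ContinuousOn P (Icc (0:ℝ) 1))
    (hDcont : ContinuousOn (fun t => (D t).comp (P t)) (Icc (0:ℝ) 1))
    (hiso : ∀ t ∈ Ioc (0:ℝ) 1,
      (∀ x ∈ LinearMap.range (P t : H →ₗ[ℝ] H), D t x = 0 → x = 0) ∧
      (∀ y : H₂, ∃ x ∈ LinearMap.range (P t : H →ₗ[ℝ] H), D t x = y))
    (hsurj0 : ∀ y : H₂, ∃ x ∈ LinearMap.range (P 0 : H →ₗ[ℝ] H), D 0 x = y) :
    ∀ x ∈ LinearMap.range (P 0 : H →ₗ[ℝ] H), D 0 x = 0 → x = 0 := by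
  rintro x ⟨y, rfl⟩ hx
  have h0 : (0 : ℝ) ∈ Icc (0 : ℝ) 1 := left_mem_Icc.2 zero_le_one
  have hfix : P 0 (P 0 y) = P 0 y := congr($(hproj 0 h0) y)
  have hsurj : Function.Surjective ((D 0).comp (P 0)) := fun z ↦ by
    obtain ⟨_, ⟨w, rfl⟩, hw⟩ := hsurj0 z
    exact ⟨w, hw⟩
  have : (𝓝[Ioc (0 : ℝ) 1] 0).NeBot := left_nhdsWithin_Ioc_neBot zero_lt_one
  have hker : ∀ t ∈ Ioc (0 : ℝ) 1, ∀ v, (D t).comp (P t) v = 0 → P t v = 0 :=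
    fun t ht v hv ↦ (hiso t ht).1 _ ⟨v, rfl⟩ hv
  have hPx : P 0 (P 0 y) = 0 :=
    ((hPcont 0 h0).mono Ioc_subset_Icc_self).apply_eq_zero_of_hasRightInverse
      ((hDcont 0 h0).mono Ioc_subset_Icc_self)
      (.of_surjective_of_innerProductSpace hsurj) hker (by simpa [hfix] using hx)
  rwa [hfix] at hPx

/-- A continuous family of closed subspaces `V t = range (P t)` of a Hilbert
space `H` (given by continuous projections `P t`), and a family `D t` of uniformly bounded
operators with closed range on `V t`, continuous in `t`, which are isomorphisms from `V t`
onto `H₂` for `t ∈ (0,1]`.  If `D 0` is surjective on `V 0`, then `D 0` is injective on `V 0`. -/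
theorem stmt0
    {H H₂ : Type*} [NormedAddCommGroup H] [InnerProductSpace ℝ H] [CompleteSpace H]
    [NormedAddCommGroup H₂] [InnerProductSpace ℝ H₂] [CompleteSpace H₂]
    (P : ℝ → H →L[ℝ] H) (D : ℝ → H →L[ℝ] H₂)
    (hproj : ∀ t ∈ Icc (0:ℝ) 1, (P t).comp (P t) = P t)
    (hPcont : ContinuousOn P (Icc (0:ℝ) 1))
    (hDcont : ContinuousOn (fun t => (D t).comp (P t)) (Icc (0:ℝ) 1))
    (hbound : ∃ M : ℝ, ∀ t ∈ Icc (0:ℝ) 1, ‖D t‖ ≤ M)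
    (hclosed : ∀ t ∈ Icc (0:ℝ) 1, IsClosed ((D t) '' (LinearMap.range (P t : H →ₗ[ℝ] H) : Set H)))
    (hiso : ∀ t ∈ Ioc (0:ℝ) 1,
      (∀ x ∈ LinearMap.range (P t : H →ₗ[ℝ] H), D t x = 0 → x = 0) ∧
      (∀ y : H₂, ∃ x ∈ LinearMap.range (P t : H →ₗ[ℝ] H), D t x = y))
    (hsurj0 : ∀ y : H₂, ∃ x ∈ LinearMap.range (P 0 : H →ₗ[ℝ] H), D 0 x = y) :
    ∀ x ∈ LinearMap.range (P 0 : H →ₗ[ℝ] H), D 0 x = 0 → x = 0 :=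
  stmt0_general P D hproj hPcont hDcont hiso hsurj0
end

section
/- Let H be a Hilbert space, V a finite-dimensional vector space, and L ⊆ H ⊕ V a closed linear subspace. Then the image of L under the orthogonal projection P : H ⊕ V → H is a closed subspace of H. -/
/-!
`P(L)` is the preimage of `L + ({0} × V)` under `h ↦ (h, 0)`, and the sum of a closed subspace
and a finite-dimensional one is closed.
-/

theorem Submodule.isClosed_map_of_rightInverse_of_finiteDimensional_ker
    {𝕜 E F : Type*} [NontriviallyNormedField 𝕜] [CompleteSpace 𝕜]
    [AddCommGroup E] [TopologicalSpace E] [IsTopologicalAddGroup E] [Module 𝕜 E]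
    [ContinuousSMul 𝕜 E] [AddCommGroup F] [TopologicalSpace F] [Module 𝕜 F]
    {f : E →L[𝕜] F} {g : F →L[𝕜] E} (hfg : Function.RightInverse g f)
    [FiniteDimensional 𝕜 (LinearMap.ker (f : E →ₗ[𝕜] F))]
    {L : Submodule 𝕜 E} (hL : IsClosed (L : Set E)) :
    IsClosed (L.map (f : E →ₗ[𝕜] F) : Set F) := by
  have hcomp : (f : E →ₗ[𝕜] F) ∘ₗ (g : F →ₗ[𝕜] E) = LinearMap.id := LinearMap.ext hfg
  have hmap : L.map (f : E →ₗ[𝕜] F) =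
      (L ⊔ LinearMap.ker (f : E →ₗ[𝕜] F)).comap (g : F →ₗ[𝕜] E) := by
    rw [← Submodule.comap_map_eq, ← Submodule.comap_comp, hcomp, Submodule.comap_id]
  rw [hmap]
  exact (L.isClosed_sup_finiteDimensional _ hL).preimage g.continuous

theorem stmt1_general
    {H V : Type*} [NormedAddCommGroup H] [InnerProductSpace ℝ H]
    [NormedAddCommGroup V] [InnerProductSpace ℝ V] [FiniteDimensional ℝ V]
    (L : Submodule ℝ (H × V)) (hL : IsClosed (L : Set (H × V))) :
    IsClosed ((L.map (ContinuousLinearMap.fst ℝ H V : H × V →ₗ[ℝ] H) : Submodule ℝ H) : Set H) := by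
  have : FiniteDimensional ℝ (LinearMap.ker (ContinuousLinearMap.fst ℝ H V : H × V →ₗ[ℝ] H)) := by
    rw [ContinuousLinearMap.coe_fst, LinearMap.ker_fst]
    infer_instance
  exact Submodule.isClosed_map_of_rightInverse_of_finiteDimensional_ker
    (g := ContinuousLinearMap.inl ℝ H V) (fun _ ↦ rfl) hL

/-- If `H` is a Hilbert space, `V` a finite-dimensional inner product space and
`L ⊆ H × V` a closed linear subspace, then the image of `L` under the orthogonal projection
onto the first factor is a closed subspace of `H`. -/
theorem stmt1
    {H V : Type*} [NormedAddCommGroup H] [InnerProductSpace ℝ H] [CompleteSpace H]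
    [NormedAddCommGroup V] [InnerProductSpace ℝ V] [FiniteDimensional ℝ V]
    (L : Submodule ℝ (H × V)) (hL : IsClosed (L : Set (H × V))) :
    IsClosed ((L.map (ContinuousLinearMap.fst ℝ H V : H × V →ₗ[ℝ] H) : Submodule ℝ H) : Set H) :=
  stmt1_general L hL
end
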